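/- arXiv:0708.1730 — 2 statements merged into one kernel-verified Lean document; each statement's English description precedes it below -/
import Mathlib

section
/- Let m ≥ 1. If X ⊆ ℝ^m is a conical limit set and U ⊆ ℝ^m is open, then X ∩ U is a conical limit set. -/
/-! The radius `√t` tends to `0` as `t → 0`, but dominates `C * t` for every fixed `C`.
Keeping only the points `(t, v)` of `E` whose ball of radius `√t` around `v` lies in `U`
therefore retains a tail of every conical sequence converging into the open set `U`, while
every conical sequence of the retained points eventually has its limit inside one of these
balls, hence in `U`. -/

open Filter Topology

/-- The open upper half-space over a normed space `V`: pairs `(t, v)` with `t > 0`. -/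
def upperHalf (V : Type*) [NormedAddCommGroup V] : Set (ℝ × V) := {p | 0 < p.1}

/-- The conical limit set of `E ⊆ ℝ × V`: points `x` for which there are `C > 0` and a
sequence `(t_n, v_n)` in `E` with `t_n → 0`, `v_n → x` and `‖v_n - x‖ ≤ C * t_n`. -/
def conicalLimitSet {V : Type*} [NormedAddCommGroup V] (E : Set (ℝ × V)) : Set V :=
  {x | ∃ C > 0, ∃ w : ℕ → ℝ × V, (∀ n, w n ∈ E) ∧
    Tendsto (fun n => (w n).1) atTop (𝓝 (0 : ℝ)) ∧
    Tendsto (fun n => (w n).2) atTop (𝓝 x) ∧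
    ∀ n, ‖(w n).2 - x‖ ≤ C * (w n).1}

/-- `X ⊆ V` is a conical limit set if it is the conical limit set of some subset of the
upper half-space. -/
def IsConicalLimitSet {V : Type*} [NormedAddCommGroup V] (X : Set V) : Prop :=
  ∃ E ⊆ upperHalf V, conicalLimitSet E = X

open Metric

lemma Real.mul_le_sqrt_of_mul_sqrt_le_one {C t : ℝ} (ht : 0 ≤ t) (h : C * √t ≤ 1) :
    C * t ≤ √t :=
  calc C * t = C * √t * √t := by rw [mul_assoc, Real.mul_self_sqrt ht]
    _ ≤ 1 * √t := mul_le_mul_of_nonneg_right h (Real.sqrt_nonneg t)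
    _ = √t := one_mul _

lemma Filter.Tendsto.eventually_closedBall_sqrt_subset {α X : Type*} [PseudoMetricSpace X]
    {l : Filter α} {t : α → ℝ} {v : α → X} {x : X} {U : Set X}
    (ht : Tendsto t l (𝓝 0)) (hv : Tendsto v l (𝓝 x)) (hU : U ∈ 𝓝 x) :
    ∀ᶠ a in l, closedBall (v a) √(t a) ⊆ U := by
  obtain ⟨ε, hε, hεU⟩ := Metric.mem_nhds_iff.1 hU
  have hsmall : Tendsto (fun a => √(t a) + dist (v a) x) l (𝓝 0) := by
    simpa using ht.sqrt.add (tendsto_iff_dist_tendsto_zero.1 hv)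
  filter_upwards [hsmall.eventually_lt_const hε] with a ha
  exact (closedBall_subset_ball' ha).trans hεU

section

variable {V : Type*} [NormedAddCommGroup V]

lemma conicalLimitSet_mono {E F : Set (ℝ × V)} (h : E ⊆ F) :
    conicalLimitSet E ⊆ conicalLimitSet F :=
  fun _ ⟨C, hC, w, hw, ht, hv, hb⟩ => ⟨C, hC, w, fun n => h (hw n), ht, hv, hb⟩

lemma mem_conicalLimitSet_of_eventually {E : Set (ℝ × V)} {x : V} {C : ℝ} (hC : 0 < C)
    {w : ℕ → ℝ × V} (ht : Tendsto (fun n => (w n).1) atTop (𝓝 0))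
    (hv : Tendsto (fun n => (w n).2) atTop (𝓝 x))
    (hw : ∀ᶠ n in atTop, w n ∈ E ∧ ‖(w n).2 - x‖ ≤ C * (w n).1) :
    x ∈ conicalLimitSet E := by
  obtain ⟨N, hN⟩ := eventually_atTop.1 hw
  have hshift := tendsto_add_atTop_nat N
  exact ⟨C, hC, fun n => w (n + N), fun n => (hN _ (Nat.le_add_left N n)).1,
    ht.comp hshift, hv.comp hshift, fun n => (hN _ (Nat.le_add_left N n)).2⟩

def sqrtBallRestrict (E : Set (ℝ × V)) (U : Set V) : Set (ℝ × V) :=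
  {p ∈ E | closedBall p.2 √p.1 ⊆ U}

lemma conicalLimitSet_sqrtBallRestrict_subset (E : Set (ℝ × V)) (U : Set V) :
    conicalLimitSet (sqrtBallRestrict E U) ⊆ U := by
  rintro x ⟨C, hC, w, hw, ht, -, hb⟩
  have hsqrt : Tendsto (fun n => C * √(w n).1) atTop (𝓝 0) := by
    simpa using ht.sqrt.const_mul C
  obtain ⟨n, hn⟩ := (hsqrt.eventually_lt_const one_pos).exists
  have ht_nonneg : 0 ≤ (w n).1 := nonneg_of_mul_nonneg_right ((norm_nonneg _).trans (hb n)) hC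
  refine (hw n).2 (mem_closedBall'.2 ?_)
  rw [dist_eq_norm]
  exact (hb n).trans (Real.mul_le_sqrt_of_mul_sqrt_le_one ht_nonneg hn.le)

lemma conicalLimitSet_sqrtBallRestrict {U : Set V} (hU : IsOpen U) (E : Set (ℝ × V)) :
    conicalLimitSet (sqrtBallRestrict E U) = conicalLimitSet E ∩ U := by
  refine Set.Subset.antisymm (Set.subset_inter (conicalLimitSet_mono (Set.sep_subset _ _))
    (conicalLimitSet_sqrtBallRestrict_subset E U)) ?_
  rintro x ⟨⟨C, hC, w, hw, ht, hv, hb⟩, hxU⟩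
  refine mem_conicalLimitSet_of_eventually hC ht hv ?_
  filter_upwards [ht.eventually_closedBall_sqrt_subset hv (hU.mem_nhds hxU)] with n hn
  exact ⟨⟨hw n, hn⟩, hb n⟩

end

theorem isConicalLimitSet_inter_open_general (m : ℕ)
    (X U : Set (EuclideanSpace ℝ (Fin m))) (hX : IsConicalLimitSet X)
    (hU : IsOpen U) :
    IsConicalLimitSet (X ∩ U) := by
  obtain ⟨E, hE, rfl⟩ := hX
  exact ⟨sqrtBallRestrict E U, (Set.sep_subset _ _).trans hE,
    conicalLimitSet_sqrtBallRestrict hU E⟩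

/-- The intersection of a conical limit set in `ℝ^m` with an open set is a conical
limit set. -/
theorem isConicalLimitSet_inter_open (m : ℕ) (hm : 1 ≤ m)
    (X U : Set (EuclideanSpace ℝ (Fin m))) (hX : IsConicalLimitSet X)
    (hU : IsOpen U) :
    IsConicalLimitSet (X ∩ U) :=
  isConicalLimitSet_inter_open_general m X U hX hU
end

section
/- Let m ≥ 1 and let (A_i)_{i ∈ ℕ} be a sequence of subsets of ℝ^m, each of which is a conical limit set. If the intersection ⋂_{i ∈ ℕ} A_i is countable, then ⋂_{i ∈ ℕ} A_i is a conical limit set. -/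
open Filter Topology

/-!
Write `X = ⋂ i, A i = ⋂ i, Λc(E i)`. Say that `S` is thick at `z` if for every aperture `C`
and every small scale `t`, each point of the ball of radius `C t` about `z` lies within `t` of
`S \ {z}`. No nonempty `S ⊆ X` is thick at all of its points: by the Baire category theorem
in `closure S`, some point lies, at every scale, within the shadow of every `E i`, hence in `X`,
while avoiding each of the countably many points of `X`. Hence the transfinite derivative
`S ↦ {z ∈ X | S is thick at z}` dies out, which gives each `x ∈ X` an ordinal rank such that `x`
is not thick in the set of points of rank at least its own: there are arbitrarily small scales
`t` and holes `v` at distance `O(t)` from `x` whose `t`-ball misses every other such point.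

For the `k`-th point `q k` of `X`, put the points `(t / (k + 1), v)` into `E`. Each `q k` is a
conical limit point of `E`. Conversely, a conical limit point `y ∉ X` would be reached through
holes of points `q k → y` with `k → ∞`; at the point of least rank among them, the hole of
radius `(k + 1)` times the height is too wide for the cone at `y` to cross.
-/

open Set Metric OrdinalApprox

universe u

theorem exists_rank_forall_not {α : Type u} (X : Set α) (P : Set α → α → Prop)
    (hmono : ∀ ⦃S T⦄, S ⊆ T → ∀ ⦃z⦄, P S z → P T z)
    (hX : ∀ S ⊆ X, (∀ z ∈ S, P S z) → S = ∅) :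
    ∃ rk : α → Ordinal.{u}, ∀ x ∈ X, ¬ P {y ∈ X | rk x ≤ rk y} x := by
  let f : Set α →o Set α := ⟨fun S => {z ∈ X | P S z}, fun S T hST z hz => ⟨hz.1, hmono hST hz.2⟩⟩
  have hfix : ∀ z ∈ f.gfp, z ∈ X ∧ P f.gfp z := fun z hz => by
    rw [← f.map_gfp] at hz
    exact hz
  have hgfp : f.gfp = ∅ := hX _ (fun z hz => (hfix z hz).1) fun z hz => (hfix z hz).2
  let stage := gfpApprox f ⊤
  let rk x := sInf {a | x ∉ f (stage a)}
  have hleave : ∀ x, {a | x ∉ f (stage a)}.Nonempty := fun x =>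
    ⟨(Order.succ (Cardinal.mk (Set α))).ord, by
      change x ∉ f (gfpApprox f ⊤ _)
      rw [gfpApprox_ord_eq_gfp, f.map_gfp, hgfp]
      exact notMem_empty x⟩
  have mem_stage : ∀ x, x ∈ stage (rk x) := fun x => by
    change x ∈ gfpApprox f ⊤ (rk x)
    rw [gfpApprox]
    simp only [top_inf_eq, iInf_eq_iInter, mem_iInter]
    exact fun b hb => not_not.1 (notMem_of_lt_csInf' hb)
  refine ⟨rk, fun x hx hP => csInf_mem (hleave x) ⟨hx, hmono ?_ hP⟩⟩
  exact fun y hy => (gfpApprox_anti_right f hy.2 : stage (rk y) ⊆ stage (rk x)) (mem_stage y)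

theorem nonempty_closure_inter_sInter {α : Type*} [PseudoMetricSpace α] [CompleteSpace α]
    {𝒰 : Set (Set α)} (h𝒰 : 𝒰.Countable) (hopen : ∀ U ∈ 𝒰, IsOpen U) {S : Set α}
    (hS : S.Nonempty) (hdense : ∀ U ∈ 𝒰, S ⊆ closure (S ∩ U)) :
    (closure S ∩ ⋂₀ 𝒰).Nonempty := by
  have : CompleteSpace (closure S) := isClosed_closure.completeSpace_coe
  have : Nonempty (closure S) := hS.closure.to_subtype
  have hdense' : ∀ U ∈ 𝒰, Dense ((↑) ⁻¹' U : Set (closure S)) := fun U hU => by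
    rw [Subtype.dense_iff, Subtype.image_preimage_coe]
    exact (closure_minimal (hdense U hU) isClosed_closure).trans
      (closure_mono (inter_subset_inter_left U subset_closure))
  obtain ⟨y, hy⟩ := (dense_biInter_of_isOpen
    (fun U hU => (hopen U hU).preimage continuous_subtype_val) h𝒰 hdense').nonempty
  exact ⟨y, y.2, mem_sInter.2 fun U hU => mem_iInter₂.1 hy U hU⟩

theorem tendsto_cofinite_of_tendsto_comp {α ι X : Type*} [TopologicalSpace X] [T1Space X]
    {f : ι → X} {k : α → ι} {l : Filter α} {y : X} (h : Tendsto (f ∘ k) l (𝓝 y))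
    (hy : y ∉ range f) : Tendsto k l cofinite := fun s hs => by
  have hnhds : (f '' sᶜ)ᶜ ∈ 𝓝 y :=
    (Finite.image f hs).isClosed.isOpen_compl.mem_nhds fun ⟨i, _, hi⟩ => hy ⟨i, hi⟩
  refine mem_map.2 (mem_of_superset (mem_map.1 (h hnhds)) fun a ha => ?_)
  by_contra has
  exact ha ⟨k a, has, rfl⟩

variable {V : Type*}

section Thick

variable [PseudoMetricSpace V]

def IsThickAt (S : Set V) (z : V) : Prop :=
  ∀ C > 0, ∀ᶠ t in 𝓝[>] (0 : ℝ), ∀ v ∈ closedBall z (C * t), ∃ w ∈ S, w ≠ z ∧ dist w v < t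

theorem IsThickAt.mono {S T : Set V} {z : V} (hST : S ⊆ T) (h : IsThickAt S z) :
    IsThickAt T z := fun C hC => (h C hC).mono fun _ ht v hv =>
  let ⟨w, hwS, hw⟩ := ht v hv
  ⟨w, hST hwS, hw⟩

theorem IsThickAt.mem_closure_diff {S : Set V} {z : V} (h : IsThickAt S z) :
    z ∈ closure (S \ {z}) := by
  refine Metric.mem_closure_iff.2 fun ε hε => ?_
  obtain ⟨t, ht, htε⟩ := ((h 1 one_pos).and (Ioo_mem_nhdsGT hε)).exists
  obtain ⟨w, hwS, hwz, hw⟩ := ht z (mem_closedBall_self (by linarith [htε.1]))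
  exact ⟨w, ⟨hwS, hwz⟩, by rw [dist_comm]; linarith [htε.2]⟩

theorem subset_closure_diff_singleton {S : Set V} (hS : ∀ z ∈ S, IsThickAt S z) (x : V) :
    S ⊆ closure (S \ {x}) := fun z hz => by
  obtain rfl | hzx := eq_or_ne z x
  · exact (hS z hz).mem_closure_diff
  · exact subset_closure ⟨hz, hzx⟩

theorem exists_hole_of_not_isThickAt {S : Set V} {z : V} (h : ¬IsThickAt S z) :
    ∃ C ≥ 1, ∀ δ > 0, ∃ t > 0, C * t ≤ δ ∧
      ∃ v ∈ closedBall z (C * t), ∀ w ∈ S, w ≠ z → t ≤ dist w v := by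
  simp only [IsThickAt, not_forall, not_eventually, not_exists, not_and, not_lt] at h
  obtain ⟨C, hC, hfreq⟩ := h
  refine ⟨max C 1, le_max_right _ _, fun δ hδ => ?_⟩
  obtain ⟨t, ⟨v, hv, hfree⟩, ht⟩ :=
    (hfreq.and_eventually (Ioo_mem_nhdsGT (div_pos hδ (by positivity : (0 : ℝ) < max C 1)))).exists
  exact ⟨t, ht.1, (le_div_iff₀' (by positivity)).1 ht.2.le, v,
    closedBall_subset_closedBall (mul_le_mul_of_nonneg_right (le_max_left C 1) ht.1.le) hv, hfree⟩

end Thick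

section Conical

variable [NormedAddCommGroup V]

theorem mem_conicalLimitSet_iff {E : Set (ℝ × V)} {x : V} :
    x ∈ conicalLimitSet E ↔ ∃ C > 0, ∀ ε > 0, ∃ p ∈ E, p.1 ≤ ε ∧ ‖p.2 - x‖ ≤ C * p.1 := by
  constructor
  · rintro ⟨C, hC, w, hwE, ht, -, hcone⟩
    refine ⟨C, hC, fun ε hε => ?_⟩
    obtain ⟨n, hn⟩ := (ht.eventually (gt_mem_nhds hε)).exists
    exact ⟨w n, hwE n, hn.le, hcone n⟩
  · rintro ⟨C, hC, h⟩
    choose w hwE hwε hcone using fun n : ℕ => h (1 / (n + 1)) (by positivity)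
    have ht : Tendsto (fun n => (w n).1) atTop (𝓝 0) :=
      squeeze_zero (fun n => nonneg_of_mul_nonneg_right ((norm_nonneg _).trans (hcone n)) hC)
        hwε tendsto_one_div_add_atTop_nhds_zero_nat
    refine ⟨C, hC, w, hwE, ht, ?_, hcone⟩
    rw [tendsto_iff_norm_sub_tendsto_zero]
    exact squeeze_zero (fun n => norm_nonneg _) hcone (by simpa using ht.const_mul C)

theorem conicalLimitSet_empty : conicalLimitSet (∅ : Set (ℝ × V)) = ∅ :=
  eq_empty_of_forall_notMem fun _ ⟨_, _, _, hw, _⟩ => hw 0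

def coneShadow (E : Set (ℝ × V)) (δ : ℝ) : Set V := ⋃ p ∈ {p ∈ E | p.1 < δ}, ball p.2 p.1

theorem isOpen_coneShadow (E : Set (ℝ × V)) (δ : ℝ) : IsOpen (coneShadow E δ) :=
  isOpen_biUnion fun _ _ => isOpen_ball

theorem mem_conicalLimitSet_of_forall_mem_coneShadow {E : Set (ℝ × V)} {y : V}
    (h : ∀ n : ℕ, y ∈ coneShadow E (1 / (n + 1))) : y ∈ conicalLimitSet E := by
  refine mem_conicalLimitSet_iff.2 ⟨1, one_pos, fun ε hε => ?_⟩
  obtain ⟨n, hn⟩ := exists_nat_one_div_lt hε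
  obtain ⟨p, ⟨hpE, hpδ⟩, hyp⟩ := mem_iUnion₂.1 (h n)
  refine ⟨p, hpE, by linarith, ?_⟩
  rw [one_mul, ← dist_eq_norm, dist_comm]
  exact (mem_ball.1 hyp).le

theorem subset_closure_inter_coneShadow {E : Set (ℝ × V)} (hE : E ⊆ upperHalf V) {S : Set V}
    (hSE : S ⊆ conicalLimitSet E) (hS : ∀ z ∈ S, IsThickAt S z) {δ : ℝ} (hδ : 0 < δ) :
    S ⊆ closure (S ∩ coneShadow E δ) := fun z hz => by
  refine Metric.mem_closure_iff.2 fun ε hε => ?_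
  obtain ⟨C, hC, hcone⟩ := mem_conicalLimitSet_iff.1 (hSE hz)
  have hev : ∀ᶠ t in 𝓝[>] (0 : ℝ), t < δ ∧ (C + 1) * t < ε ∧
      ∀ v ∈ closedBall z (C * t), ∃ w ∈ S, w ≠ z ∧ dist w v < t := by
    filter_upwards [Ioo_mem_nhdsGT hδ, Ioo_mem_nhdsGT (div_pos hε (by positivity : 0 < C + 1)),
      hS z hz C hC] with t htδ htε hthick
    exact ⟨htδ.2, (lt_div_iff₀' (by positivity)).1 htε.2, hthick⟩
  obtain ⟨t₀, ht₀, hsmall⟩ := (nhdsGT_basis (0 : ℝ)).eventually_iff.1 hev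
  obtain ⟨p, hpE, hpt, hpz⟩ := hcone (t₀ / 2) (by positivity)
  obtain ⟨hpδ, hpε, hthick⟩ := hsmall ⟨hE hpE, by linarith⟩
  obtain ⟨w, hwS, -, hwp⟩ := hthick p.2 (by rwa [mem_closedBall, dist_eq_norm])
  refine ⟨w, ⟨hwS, mem_iUnion₂.2 ⟨p, ⟨hpE, hpδ⟩, hwp⟩⟩, ?_⟩
  calc dist z w ≤ dist z p.2 + dist w p.2 := dist_triangle_right _ _ _
    _ < C * p.1 + p.1 := add_lt_add_of_le_of_lt (by rwa [dist_comm, dist_eq_norm]) hwp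
    _ = (C + 1) * p.1 := by ring
    _ < ε := hpε

theorem eq_empty_of_forall_isThickAt [CompleteSpace V] {E : ℕ → Set (ℝ × V)}
    (hE : ∀ i, E i ⊆ upperHalf V) (hc : (⋂ i, conicalLimitSet (E i)).Countable) {S : Set V}
    (hSE : S ⊆ ⋂ i, conicalLimitSet (E i)) (hS : ∀ z ∈ S, IsThickAt S z) : S = ∅ := by
  set X := ⋂ i, conicalLimitSet (E i)
  refine not_nonempty_iff_eq_empty.1 fun hne => ?_
  let 𝒰 : Set (Set V) :=
    range (fun p : ℕ × ℕ => coneShadow (E p.1) (1 / (p.2 + 1))) ∪ (fun x => {x}ᶜ) '' X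
  have h𝒰 : 𝒰.Countable := (countable_range _).union (hc.image _)
  have hopen : ∀ U ∈ 𝒰, IsOpen U := by
    rintro _ (⟨p, rfl⟩ | ⟨x, -, rfl⟩)
    exacts [isOpen_coneShadow _ _, isOpen_compl_singleton]
  have hdense : ∀ U ∈ 𝒰, S ⊆ closure (S ∩ U) := by
    rintro _ (⟨⟨i, n⟩, rfl⟩ | ⟨x, -, rfl⟩)
    · exact subset_closure_inter_coneShadow (hE i) (fun z hz => mem_iInter.1 (hSE hz) i) hS
        (by positivity)
    · exact subset_closure_diff_singleton hS x
  obtain ⟨y, -, hy⟩ := nonempty_closure_inter_sInter h𝒰 hopen hne hdense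
  have hyX : y ∈ X := mem_iInter.2 fun i =>
    mem_conicalLimitSet_of_forall_mem_coneShadow fun n => hy _ (Or.inl ⟨(i, n), rfl⟩)
  exact hy {y}ᶜ (Or.inr ⟨y, hyX, rfl⟩) rfl

end Conical

section Construction

/- The point `(t j / (j.unpair.1 + 1), v j)` comes from a hole of `q j.unpair.1`; the pairing
lets every `q k` use infinitely many scales. -/
variable [NormedAddCommGroup V] {q : ℕ → V} {C t : ℕ → ℝ} {v : ℕ → V}

theorem range_subset_conicalLimitSet (hC : ∀ k, 0 < C k) (ht : ∀ j, 0 < t j)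
    (ht' : ∀ j, t j ≤ (1 / 2) ^ j) (hv : ∀ j, dist (v j) (q j.unpair.1) ≤ C j.unpair.1 * t j) :
    range q ⊆ conicalLimitSet (range fun j => (t j / (j.unpair.1 + 1), v j)) := by
  rintro _ ⟨k, rfl⟩
  refine mem_conicalLimitSet_iff.2 ⟨C k * (k + 1), mul_pos (hC k) k.cast_add_one_pos,
    fun ε hε => ?_⟩
  obtain ⟨n, hn⟩ := exists_pow_lt_of_lt_one hε (by norm_num : (1 / 2 : ℝ) < 1)
  refine ⟨_, ⟨Nat.pair k n, rfl⟩, ?_, ?_⟩ <;> simp only [Nat.unpair_pair]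
  · calc t (k.pair n) / (k + 1) ≤ t (k.pair n) :=
          div_le_self (ht _).le (le_add_of_nonneg_left k.cast_nonneg)
      _ ≤ (1 / 2) ^ k.pair n := ht' _
      _ ≤ (1 / 2) ^ n := pow_le_pow_of_le_one (by norm_num) (by norm_num) (k.right_le_pair n)
      _ ≤ ε := hn.le
  · rw [← dist_eq_norm, mul_assoc, mul_div_cancel₀ _ k.cast_add_one_pos.ne']
    simpa using hv (k.pair n)

theorem conicalLimitSet_subset_range {β : Type*} [LinearOrder β] [WellFoundedLT β] {rk : V → β}
    (ht : ∀ j, 0 < t j) (hv : ∀ j, dist (v j) (q j.unpair.1) ≤ (1 / 2) ^ j)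
    (hfree : ∀ j i, rk (q j.unpair.1) ≤ rk (q i) → q i ≠ q j.unpair.1 → t j ≤ dist (q i) (v j)) :
    conicalLimitSet (range fun j => (t j / (j.unpair.1 + 1), v j)) ⊆ range q := by
  rintro y ⟨C₀, hC₀, w, hwE, hτ, hy, hcone⟩
  by_contra hyq
  choose j hj using hwE
  obtain rfl : w = fun l => (t (j l) / ((j l).unpair.1 + 1), v (j l)) := funext fun l => (hj l).symm
  have hτpos : ∀ j, 0 < t j / (j.unpair.1 + 1) := fun j => div_pos (ht j) (by positivity)
  have hj_top : Tendsto j atTop atTop :=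
    (tendsto_cofinite_of_tendsto_comp (f := fun j => t j / (j.unpair.1 + 1)) hτ
      fun ⟨j, hj⟩ => (hτpos j).ne' hj).mono_right Nat.cofinite_eq_atTop.le
  have hqy : Tendsto (fun l => q (j l).unpair.1) atTop (𝓝 y) :=
    tendsto_of_tendsto_of_dist hy <| squeeze_zero (fun _ => dist_nonneg) (fun l => hv (j l))
      ((tendsto_pow_atTop_nhds_zero_of_lt_one (by norm_num) (by norm_num)).comp hj_top)
  have hκ_top : Tendsto (fun l => (j l).unpair.1) atTop atTop :=
    (tendsto_cofinite_of_tendsto_comp (f := q) hqy hyq).mono_right Nat.cofinite_eq_atTop.le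
  obtain ⟨L, hL⟩ := eventually_atTop.1
    ((tendsto_natCast_atTop_atTop (R := ℝ)).comp hκ_top |>.eventually_ge_atTop (C₀ + 1))
  obtain ⟨l₀, hl₀, hmin⟩ := (InvImage.wf (fun l => rk (q (j l).unpair.1)) wellFounded_lt).has_min
    {l | L ≤ l} ⟨L, le_refl L⟩
  obtain ⟨l, hl, hclose, hne⟩ := ((eventually_ge_atTop L).and
    ((hqy.eventually (ball_mem_nhds y (hτpos (j l₀)))).and
      (hqy.eventually_ne fun heq => hyq ⟨_, heq.symm⟩))).exists
  set κ₀ := (j l₀).unpair.1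
  set τ := t (j l₀) / (κ₀ + 1) with hτ_def
  have hgap : (κ₀ + 1) * τ ≤ dist (q (j l).unpair.1) (v (j l₀)) := by
    rw [hτ_def, mul_div_cancel₀ _ (by positivity)]
    exact hfree (j l₀) _ (not_lt.1 (hmin l hl)) hne
  have hyh : dist y (v (j l₀)) ≤ C₀ * τ := by rw [dist_comm, dist_eq_norm]; exact hcone l₀
  have hκ₀ : C₀ + 1 ≤ (κ₀ : ℝ) := hL l₀ hl₀
  have hτ₀ : 0 < τ := hτpos (j l₀)
  nlinarith [dist_triangle (q (j l).unpair.1) y (v (j l₀)), mem_ball.1 hclose]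

end Construction

theorem isConicalLimitSet_range_of_not_isThickAt [NormedAddCommGroup V] {β : Type*} [LinearOrder β]
    [WellFoundedLT β] (q : ℕ → V) (rk : V → β)
    (hrk : ∀ k, ¬IsThickAt {x ∈ range q | rk (q k) ≤ rk x} (q k)) :
    IsConicalLimitSet (range q) := by
  choose C hC hhole using fun k => exists_hole_of_not_isThickAt (hrk k)
  choose t ht hCt v hv hfree using fun j : ℕ => hhole j.unpair.1 ((1 / 2) ^ j) (by positivity)
  refine ⟨range fun j => (t j / (j.unpair.1 + 1), v j), ?_, subset_antisymm ?_ ?_⟩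
  · rintro _ ⟨j, rfl⟩
    exact div_pos (ht j) (by positivity)
  · exact conicalLimitSet_subset_range ht (fun j => (hv j).trans (hCt j))
      fun j i hr hne => hfree j (q i) ⟨mem_range_self i, hr⟩ hne
  · exact range_subset_conicalLimitSet (fun k => one_pos.trans_le (hC k)) ht
      (fun j => (le_mul_of_one_le_left (ht j).le (hC _)).trans (hCt j)) hv

theorem countable_iInter_conicalLimitSet_general (m : ℕ)
    (A : ℕ → Set (EuclideanSpace ℝ (Fin m))) (hA : ∀ i, IsConicalLimitSet (A i))
    (hc : (⋂ i, A i).Countable) :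
    IsConicalLimitSet (⋂ i, A i) := by
  choose E hE hEA using hA
  have hX : ⋂ i, A i = ⋂ i, conicalLimitSet (E i) := by simp only [hEA]
  obtain hempty | hne := (⋂ i, A i).eq_empty_or_nonempty
  · exact ⟨∅, empty_subset _, conicalLimitSet_empty.trans hempty.symm⟩
  obtain ⟨q, hq⟩ := hc.exists_eq_range hne
  obtain ⟨rk, hrk⟩ :=
    exists_rank_forall_not (range q) IsThickAt (fun _ _ hST _ => IsThickAt.mono hST)
    fun S hS hthick => eq_empty_of_forall_isThickAt hE (hX ▸ hc) (hX ▸ hq ▸ hS) hthick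
  rw [hq]
  exact isConicalLimitSet_range_of_not_isThickAt q rk fun k => hrk _ (mem_range_self k)

/-- A countable intersection of conical limit sets in `ℝ^m` which is countable is itself
a conical limit set. -/
theorem countable_iInter_conicalLimitSet (m : ℕ) (hm : 1 ≤ m)
    (A : ℕ → Set (EuclideanSpace ℝ (Fin m))) (hA : ∀ i, IsConicalLimitSet (A i))
    (hc : (⋂ i, A i).Countable) :
    IsConicalLimitSet (⋂ i, A i) :=
  countable_iInter_conicalLimitSet_general m A hA hc
end
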